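/- arXiv:2205.08917 — 8 statements merged into one kernel-verified Lean document; each statement's English description precedes it below -/
import Mathlib

section
/- Let Γ be the generalized subspace quiver with sink v₀, sources v_{ij} (1 ≤ i ≤ m, 1 ≤ j ≤ r_i), and w_{ij} arrows v_{ij} → v₀, over an algebraically closed field K. If X is a balanced representation of Γ (i.e., for every i the map Ψ(X,i) = ⊕_{j,k} X(α_{ij}^k) : ⊕_{j=1}^{r_i} X_{ij}^{⊕ w_{ij}} → X₀ is invertible) and Y is a subrepresentation of X, then θ(dim Y) ≤ 0, where θ_{v₀} = -m and θ_{v_{ij}} = w_{ij}; moreover equality holds if and only if Y is itself balanced. -/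
/-!
Within one cluster `i`, a subrepresentation `Y ⊆ X` gives a restriction
`Ψ(Y,i) : ⊕ⱼ Y_{ij}^{⊕ w_{ij}} → Y₀` of `Ψ(X,i)`, which is injective because `Ψ(X,i)` is. Hence
`∑ⱼ w_{ij} dim Y_{ij} ≤ dim Y₀` for each of the `m` clusters, with equality exactly when
`Ψ(Y,i)` is bijective. Summing over the clusters gives `θ(dim Y) ≤ 0`, with equality exactly
when every cluster inequality is an equality, i.e. when `Y` is balanced.
-/

open Finset Module

/-- A representation of the generalized subspace quiver (given by its vertex spaces
`X0`, `X i j` and arrow maps `f i j k : X i j →ₗ X0`) is balanced if for every cluster `i`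
the combined map `Ψ(X,i)` from the direct sum of the sources of cluster `i` to `X0` is
bijective. -/
def IsBalancedRep (K : Type*) [Field K] {m : ℕ} {r : Fin m → ℕ} (w : ∀ i, Fin (r i) → ℕ)
    {X0 : Type*} [AddCommGroup X0] [Module K X0]
    {X : ∀ i, Fin (r i) → Type*} [∀ i j, AddCommGroup (X i j)] [∀ i j, Module K (X i j)]
    (f : ∀ i j, Fin (w i j) → (X i j →ₗ[K] X0)) : Prop :=
  ∀ i, Function.Bijective
    (fun g : (j : Fin (r i)) → Fin (w i j) → X i j => ∑ j, ∑ k, f i j k (g j k))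

theorem LinearMap.bijective_iff_finrank_eq_of_injective {K V W : Type*} [Field K]
    [AddCommGroup V] [Module K V] [FiniteDimensional K V]
    [AddCommGroup W] [Module K W] [FiniteDimensional K W]
    {f : V →ₗ[K] W} (hf : Function.Injective f) :
    Function.Bijective f ↔ finrank K V = finrank K W :=
  ⟨fun h => (LinearEquiv.ofBijective f h).finrank_eq,
    fun h => ⟨hf, (LinearMap.injective_iff_surjective_of_finrank_eq_finrank h).1 hf⟩⟩

section Cluster

variable {K : Type*} [Field K] {ι : Type*} [Fintype ι] {n : ι → ℕ}
    {V : ι → Type*} [∀ j, AddCommGroup (V j)] [∀ j, Module K (V j)]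
    {W : Type*} [AddCommGroup W] [Module K W]

noncomputable def clusterMap (φ : ∀ j, Fin (n j) → (V j →ₗ[K] W)) :
    ((j : ι) → Fin (n j) → V j) →ₗ[K] W :=
  ∑ j, ∑ k, φ j k ∘ₗ LinearMap.proj k ∘ₗ LinearMap.proj j

theorem clusterMap_apply (φ : ∀ j, Fin (n j) → (V j →ₗ[K] W))
    (g : (j : ι) → Fin (n j) → V j) :
    clusterMap φ g = ∑ j, ∑ k, φ j k (g j k) := by
  simp [clusterMap]

theorem finrank_pi_fin_pi [∀ j, FiniteDimensional K (V j)] :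
    finrank K ((j : ι) → Fin (n j) → V j) = ∑ j, n j * finrank K (V j) := by
  simp [Module.finrank_pi_fintype]

theorem clusterMap_restrict_injective (φ : ∀ j, Fin (n j) → (V j →ₗ[K] W))
    (hφ : Function.Injective (clusterMap φ))
    {U : ∀ j, Submodule K (V j)} {U₀ : Submodule K W}
    (hU : ∀ j k, ∀ x ∈ U j, φ j k x ∈ U₀) :
    Function.Injective (clusterMap fun j k => (φ j k).restrict (hU j k)) := by
  intro g₁ g₂ hg
  have hval : clusterMap φ (fun j k => (g₁ j k : V j)) = clusterMap φ (fun j k => g₂ j k) := by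
    simpa [clusterMap_apply] using congrArg Subtype.val hg
  have h := hφ hval
  funext j k
  exact Subtype.ext (congrFun (congrFun h j) k)

end Cluster

theorem neg_card_mul_add_sum_nonpos_and_eq_zero_iff {ι : Type*} [Fintype ι] {a : ι → ℤ} {d : ℤ}
    (h : ∀ i, a i ≤ d) :
    -(Fintype.card ι : ℤ) * d + ∑ i, a i ≤ 0 ∧
      (-(Fintype.card ι : ℤ) * d + ∑ i, a i = 0 ↔ ∀ i, a i = d) := by
  have hsum : ∑ _i : ι, d = Fintype.card ι * d := by simp
  have heq : ∑ i, a i = ∑ _i : ι, d ↔ ∀ i, a i = d := by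
    simpa using Finset.sum_eq_sum_iff_of_le fun i (_ : i ∈ univ) => h i
  refine ⟨?_, ?_⟩
  · linarith [Finset.sum_le_sum fun i (_ : i ∈ univ) => h i]
  · rw [← heq]
    constructor <;> intro h <;> linarith

theorem isBalancedRep_iff_bijective_clusterMap {K : Type*} [Field K] {m : ℕ} {r : Fin m → ℕ}
    {w : ∀ i, Fin (r i) → ℕ} {X0 : Type*} [AddCommGroup X0] [Module K X0]
    {X : ∀ i, Fin (r i) → Type*} [∀ i j, AddCommGroup (X i j)] [∀ i j, Module K (X i j)]
    (f : ∀ i j, Fin (w i j) → (X i j →ₗ[K] X0)) :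
    IsBalancedRep K w f ↔ ∀ i, Function.Bijective (clusterMap (f i)) := by
  simp only [IsBalancedRep, ← clusterMap_apply]

theorem theta_subrep_nonpos_general (K : Type*) [Field K]
    (m : ℕ) (r : Fin m → ℕ) (w : ∀ i, Fin (r i) → ℕ)
    (X0 : Type*) [AddCommGroup X0] [Module K X0] [FiniteDimensional K X0]
    (X : ∀ i, Fin (r i) → Type*) [∀ i j, AddCommGroup (X i j)] [∀ i j, Module K (X i j)]
    [∀ i j, FiniteDimensional K (X i j)]
    (f : ∀ i j, Fin (w i j) → (X i j →ₗ[K] X0))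
    (hX : IsBalancedRep K w f)
    (Y0 : Submodule K X0) (Y : ∀ i j, Submodule K (X i j))
    (hsub : ∀ i j k, ∀ x ∈ Y i j, f i j k x ∈ Y0) :
    -(m : ℤ) * (finrank K Y0 : ℤ) + ∑ i, ∑ j, (w i j : ℤ) * (finrank K (Y i j) : ℤ) ≤ 0 ∧
    (-(m : ℤ) * (finrank K Y0 : ℤ) + ∑ i, ∑ j, (w i j : ℤ) * (finrank K (Y i j) : ℤ) = 0 ↔
      IsBalancedRep K w (fun i j k => (f i j k).restrict (hsub i j k))) := by
  set a : Fin m → ℤ := fun i => ∑ j, (w i j : ℤ) * (finrank K (Y i j) : ℤ)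
  have hXbij := (isBalancedRep_iff_bijective_clusterMap f).1 hX
  have hinj i := clusterMap_restrict_injective (f i) (hXbij i).injective (hsub i)
  have hdim i : a i = ((finrank K ((j : Fin (r i)) → Fin (w i j) → Y i j) : ℕ) : ℤ) := by
    simp [a, finrank_pi_fin_pi]
  have hle i : a i ≤ finrank K Y0 := by
    rw [hdim]
    exact_mod_cast LinearMap.finrank_le_finrank_of_injective (hinj i)
  have hbal : IsBalancedRep K w (fun i j k => (f i j k).restrict (hsub i j k)) ↔
      ∀ i, a i = finrank K Y0 := by
    simp only [isBalancedRep_iff_bijective_clusterMap, hdim, Nat.cast_inj,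
      LinearMap.bijective_iff_finrank_eq_of_injective (hinj _)]
  simpa [hbal] using neg_card_mul_add_sum_nonpos_and_eq_zero_iff hle

/-- If `X` is a balanced representation and `Y` is a subrepresentation of `X`, then
`θ(dim Y) ≤ 0`, with equality if and only if `Y` is itself balanced. -/
theorem theta_subrep_nonpos (K : Type*) [Field K] [IsAlgClosed K]
    (m : ℕ) (r : Fin m → ℕ) (w : ∀ i, Fin (r i) → ℕ)
    (X0 : Type*) [AddCommGroup X0] [Module K X0] [FiniteDimensional K X0]
    (X : ∀ i, Fin (r i) → Type*) [∀ i j, AddCommGroup (X i j)] [∀ i j, Module K (X i j)]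
    [∀ i j, FiniteDimensional K (X i j)]
    (f : ∀ i j, Fin (w i j) → (X i j →ₗ[K] X0))
    (hX : IsBalancedRep K w f)
    (Y0 : Submodule K X0) (Y : ∀ i j, Submodule K (X i j))
    (hsub : ∀ i j k, ∀ x ∈ Y i j, f i j k x ∈ Y0) :
    -(m : ℤ) * (finrank K Y0 : ℤ) + ∑ i, ∑ j, (w i j : ℤ) * (finrank K (Y i j) : ℤ) ≤ 0 ∧
    (-(m : ℤ) * (finrank K Y0 : ℤ) + ∑ i, ∑ j, (w i j : ℤ) * (finrank K (Y i j) : ℤ) = 0 ↔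
      IsBalancedRep K w (fun i j k => (f i j k).restrict (hsub i j k))) :=
  theta_subrep_nonpos_general K m r w X0 X f hX Y0 Y hsub
end

section
/- Every balanced representation X of the generalized subspace quiver Γ is θ-semistable for the stability parameter θ with θ_{v₀} = -m and θ_{v_{ij}} = w_{ij}; that is, θ(dim X) = 0 and θ(dim Y) ≤ 0 for every subrepresentation Y of X. -/
/-!
Each cluster map `Ψ(X,i)` is an isomorphism `⊕ⱼ X_{ij}^{w_{ij}} ≃ X₀`, so
`∑ⱼ w_{ij} dim X_{ij} = dim X₀` for every `i`, and summing over the `m` clusters gives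
`θ(dim X) = 0`. For a subrepresentation `Y`, `Ψ(X,i)` restricts to an injective map
`⊕ⱼ Y_{ij}^{w_{ij}} → Y₀`, so `∑ⱼ w_{ij} dim Y_{ij} ≤ dim Y₀`, and summing gives `θ(dim Y) ≤ 0`.
-/

open Finset Module

namespace SubspaceQuiver

variable {K : Type*} [Field K] {ι : Type*} [Fintype ι] {n : ι → ℕ}
  {V : ι → Type*} [∀ j, AddCommGroup (V j)] [∀ j, Module K (V j)]
  {W : Type*} [AddCommGroup W] [Module K W]

/-- For one cluster of the quiver this is the map `Ψ(X,i)`. -/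
def sumMap (f : ∀ j, Fin (n j) → V j →ₗ[K] W) : ((j : ι) → Fin (n j) → V j) →ₗ[K] W :=
  ∑ j, ∑ k, f j k ∘ₗ LinearMap.proj k ∘ₗ LinearMap.proj j

theorem coe_sumMap (f : ∀ j, Fin (n j) → V j →ₗ[K] W) :
    ⇑(sumMap f) = fun g => ∑ j, ∑ k, f j k (g j k) := by
  ext g
  simp [sumMap]

theorem finrank_pi_fin_pi [∀ j, FiniteDimensional K (V j)] :
    finrank K ((j : ι) → Fin (n j) → V j) = ∑ j, n j * finrank K (V j) := by
  simp [Module.finrank_pi_fintype]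

theorem finrank_eq_sum_of_bijective_sumMap [∀ j, FiniteDimensional K (V j)]
    {f : ∀ j, Fin (n j) → V j →ₗ[K] W} (hf : Function.Bijective (sumMap f)) :
    finrank K W = ∑ j, n j * finrank K (V j) :=
  (LinearEquiv.ofBijective _ hf).finrank_eq.symm.trans finrank_pi_fin_pi

theorem injective_sumMap_restrict {f : ∀ j, Fin (n j) → V j →ₗ[K] W}
    (hf : Function.Injective (sumMap f)) {Y : ∀ j, Submodule K (V j)} {Y0 : Submodule K W}
    (hY : ∀ j k, ∀ x ∈ Y j, f j k x ∈ Y0) :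
    Function.Injective (sumMap fun j k => (f j k).restrict (hY j k)) := by
  intro g g' hgg'
  have hsum := congrArg Subtype.val hgg'
  simp only [coe_sumMap, Submodule.coe_sum, LinearMap.coe_restrict_apply] at hsum
  have hval : (fun j k => (g j k : V j)) = fun j k => (g' j k : V j) :=
    hf (by simpa only [coe_sumMap] using hsum)
  funext j k
  exact Subtype.ext (congr_fun₂ hval j k)

theorem sum_finrank_le_of_injective_sumMap [FiniteDimensional K W]
    [∀ j, FiniteDimensional K (V j)] {f : ∀ j, Fin (n j) → V j →ₗ[K] W}
    (hf : Function.Injective (sumMap f)) {Y : ∀ j, Submodule K (V j)} {Y0 : Submodule K W}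
    (hY : ∀ j k, ∀ x ∈ Y j, f j k x ∈ Y0) :
    ∑ j, n j * finrank K (Y j) ≤ finrank K Y0 :=
  finrank_pi_fin_pi (K := K) (V := fun j => Y j) ▸
    LinearMap.finrank_le_finrank_of_injective (injective_sumMap_restrict hf hY)

end SubspaceQuiver

open SubspaceQuiver

/-- Every balanced representation `X` is `θ`-semistable for
`θ_{v₀} = -m`, `θ_{v_{ij}} = w i j`: we have `θ(dim X) = 0` and `θ(dim Y) ≤ 0` for
every subrepresentation `Y` of `X`. -/
theorem balanced_is_theta_semistable (K : Type*) [Field K]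
    (m : ℕ) (r : Fin m → ℕ) (w : ∀ i, Fin (r i) → ℕ)
    (X0 : Type*) [AddCommGroup X0] [Module K X0] [FiniteDimensional K X0]
    (X : ∀ i, Fin (r i) → Type*) [∀ i j, AddCommGroup (X i j)] [∀ i j, Module K (X i j)]
    [∀ i j, FiniteDimensional K (X i j)]
    (f : ∀ i j, Fin (w i j) → (X i j →ₗ[K] X0))
    (hX : IsBalancedRep K w f) :
    (-(m : ℤ) * (finrank K X0 : ℤ) + ∑ i, ∑ j, (w i j : ℤ) * (finrank K (X i j) : ℤ) = 0) ∧
    (∀ (Y0 : Submodule K X0) (Y : ∀ i j, Submodule K (X i j)),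
      (∀ i j k, ∀ x ∈ Y i j, f i j k x ∈ Y0) →
      -(m : ℤ) * (finrank K Y0 : ℤ) + ∑ i, ∑ j, (w i j : ℤ) * (finrank K (Y i j) : ℤ) ≤ 0) := by
  have hΨ : ∀ i, Function.Bijective (sumMap (f i)) := fun i => by
    rw [coe_sumMap]
    exact hX i
  constructor
  · have hcluster : ∀ i, ∑ j, (w i j : ℤ) * finrank K (X i j) = finrank K X0 := fun i => by
      exact_mod_cast (finrank_eq_sum_of_bijective_sumMap (hΨ i)).symm
    simp [Finset.sum_congr rfl fun i _ => hcluster i]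
  · intro Y0 Y hY
    have hcluster : ∀ i, ∑ j, (w i j : ℤ) * finrank K (Y i j) ≤ finrank K Y0 := fun i => by
      exact_mod_cast sum_finrank_le_of_injective_sumMap (hΨ i).injective (hY i)
    have hsum := Finset.sum_le_card_nsmul univ _ _ fun i _ => hcluster i
    simp only [card_univ, Fintype.card_fin, nsmul_eq_mul] at hsum
    linarith
end

section
/- If M is a balanced representation of the generalized subspace quiver Γ and N is a quotient representation of M with θ(dim N) = 0 (θ_{v₀} = -m, θ_{v_{ij}} = w_{ij}), then N is balanced. -/
open Finset Module

/-! Since `M` is balanced and `π` is surjective at the sink, every `Ψ(N,i)` is surjective, so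
`dim N₀ ≤ ∑ⱼ w i j · dim N i j` for each of the `m` clusters `i`. Summing over `i`, the hypothesis
`θ(dim N) = 0` says these `m` inequalities add up to an equality, so each is an equality, and a
surjection between spaces of equal finite dimension is bijective. -/

section BalancingMap

variable {K : Type*} [Field K] {m : ℕ} {r : Fin m → ℕ} {w : ∀ i, Fin (r i) → ℕ}
  {X0 : Type*} [AddCommGroup X0] [Module K X0]
  {X : ∀ i, Fin (r i) → Type*} [∀ i j, AddCommGroup (X i j)] [∀ i j, Module K (X i j)]

/-- The map `Ψ(X,i)` of the definition of `IsBalancedRep`, as a linear map. -/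
def balancingMap (f : ∀ i j, Fin (w i j) → (X i j →ₗ[K] X0)) (i : Fin m) :
    ((j : Fin (r i)) → Fin (w i j) → X i j) →ₗ[K] X0 :=
  ∑ j, ∑ k, f i j k ∘ₗ LinearMap.proj k ∘ₗ LinearMap.proj j

theorem balancingMap_apply (f : ∀ i j, Fin (w i j) → (X i j →ₗ[K] X0)) (i : Fin m)
    (g : (j : Fin (r i)) → Fin (w i j) → X i j) :
    balancingMap f i g = ∑ j, ∑ k, f i j k (g j k) := by
  simp [balancingMap]

theorem isBalancedRep_iff (f : ∀ i j, Fin (w i j) → (X i j →ₗ[K] X0)) :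
    IsBalancedRep K w f ↔ ∀ i, Function.Bijective (balancingMap f i) := by
  have hcoe : ∀ i, ⇑(balancingMap f i) = fun g => ∑ j, ∑ k, f i j k (g j k) :=
    fun i => funext (balancingMap_apply f i)
  simp only [IsBalancedRep, hcoe]

theorem finrank_balancingMap_domain [∀ i j, FiniteDimensional K (X i j)] (i : Fin m) :
    finrank K ((j : Fin (r i)) → Fin (w i j) → X i j) = ∑ j, w i j * finrank K (X i j) := by
  simp [Module.finrank_pi_fintype]

theorem isBalancedRep_of_surjective_of_theta_eq_zero [FiniteDimensional K X0]
    [∀ i j, FiniteDimensional K (X i j)] (f : ∀ i j, Fin (w i j) → (X i j →ₗ[K] X0))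
    (hsurj : ∀ i, Function.Surjective (balancingMap f i))
    (hθ : -(m : ℤ) * (finrank K X0 : ℤ) +
      ∑ i, ∑ j, (w i j : ℤ) * (finrank K (X i j) : ℤ) = 0) :
    IsBalancedRep K w f := by
  have hle : ∀ i, finrank K X0 ≤ ∑ j, w i j * finrank K (X i j) := fun i =>
    finrank_balancingMap_domain (K := K) (w := w) (X := X) i ▸
      LinearMap.finrank_le_finrank_of_surjective (hsurj i)
  have hsum : ∑ _i : Fin m, finrank K X0 = ∑ i, ∑ j, w i j * finrank K (X i j) := by
    simp only [sum_const, card_univ, Fintype.card_fin, smul_eq_mul]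
    have hθ' : (m : ℤ) * finrank K X0 = ∑ i, ∑ j, (w i j : ℤ) * finrank K (X i j) := by linarith
    exact_mod_cast hθ'
  have heq := (sum_eq_sum_iff_of_le fun i _ => hle i).1 hsum
  refine (isBalancedRep_iff f).2 fun i => ⟨?_, hsurj i⟩
  refine (LinearMap.injective_iff_surjective_of_finrank_eq_finrank ?_).2 (hsurj i)
  rw [finrank_balancingMap_domain, heq i (mem_univ i)]

end BalancingMap

theorem balancingMap_surjective_of_surjective {K : Type*} [Field K] {m : ℕ} {r : Fin m → ℕ}
    {w : ∀ i, Fin (r i) → ℕ} {M0 N0 : Type*} [AddCommGroup M0] [Module K M0]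
    [AddCommGroup N0] [Module K N0] {M N : ∀ i, Fin (r i) → Type*}
    [∀ i j, AddCommGroup (M i j)] [∀ i j, Module K (M i j)]
    [∀ i j, AddCommGroup (N i j)] [∀ i j, Module K (N i j)]
    {fM : ∀ i j, Fin (w i j) → (M i j →ₗ[K] M0)} {fN : ∀ i j, Fin (w i j) → (N i j →ₗ[K] N0)}
    {π0 : M0 →ₗ[K] N0} {π : ∀ i j, M i j →ₗ[K] N i j}
    (hπ : ∀ i j k x, fN i j k (π i j x) = π0 (fM i j k x)) (hsurj0 : Function.Surjective π0)
    {i : Fin m} (hM : Function.Surjective (balancingMap fM i)) :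
    Function.Surjective (balancingMap fN i) := by
  intro y
  obtain ⟨x, rfl⟩ := hsurj0 y
  obtain ⟨g, rfl⟩ := hM x
  exact ⟨fun j k => π i j (g j k), by simp only [balancingMap_apply, hπ, map_sum]⟩

theorem quotient_theta_zero_balanced_general (K : Type*) [Field K]
    (m : ℕ) (r : Fin m → ℕ) (w : ∀ i, Fin (r i) → ℕ)
    (M0 N0 : Type*) [AddCommGroup M0] [Module K M0]
    [AddCommGroup N0] [Module K N0] [FiniteDimensional K N0]
    (M N : ∀ i, Fin (r i) → Type*)
    [∀ i j, AddCommGroup (M i j)] [∀ i j, Module K (M i j)]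
    [∀ i j, AddCommGroup (N i j)] [∀ i j, Module K (N i j)]
    [∀ i j, FiniteDimensional K (N i j)]
    (fM : ∀ i j, Fin (w i j) → (M i j →ₗ[K] M0))
    (fN : ∀ i j, Fin (w i j) → (N i j →ₗ[K] N0))
    -- the quotient morphism `π : M → N`, surjective at every vertex
    (π0 : M0 →ₗ[K] N0) (π : ∀ i j, M i j →ₗ[K] N i j)
    (hπ : ∀ i j k x, fN i j k (π i j x) = π0 (fM i j k x))
    (hsurj0 : Function.Surjective π0)
    (hM : IsBalancedRep K w fM)
    (hθ : -(m : ℤ) * (finrank K N0 : ℤ) +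
      ∑ i, ∑ j, (w i j : ℤ) * (finrank K (N i j) : ℤ) = 0) :
    IsBalancedRep K w fN :=
  isBalancedRep_of_surjective_of_theta_eq_zero fN
    (fun i => balancingMap_surjective_of_surjective hπ hsurj0 ((isBalancedRep_iff fM).1 hM i).2) hθ

/-- If `M` is a balanced representation of the generalized subspace quiver and `N` is a
quotient representation of `M` with `θ(dim N) = 0` (where `θ_{v₀} = -m`,
`θ_{v_{ij}} = w i j`), then `N` is balanced. -/
theorem quotient_theta_zero_balanced (K : Type*) [Field K]
    (m : ℕ) (r : Fin m → ℕ) (w : ∀ i, Fin (r i) → ℕ)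
    (M0 N0 : Type*) [AddCommGroup M0] [Module K M0] [FiniteDimensional K M0]
    [AddCommGroup N0] [Module K N0] [FiniteDimensional K N0]
    (M N : ∀ i, Fin (r i) → Type*)
    [∀ i j, AddCommGroup (M i j)] [∀ i j, Module K (M i j)]
    [∀ i j, FiniteDimensional K (M i j)]
    [∀ i j, AddCommGroup (N i j)] [∀ i j, Module K (N i j)]
    [∀ i j, FiniteDimensional K (N i j)]
    (fM : ∀ i j, Fin (w i j) → (M i j →ₗ[K] M0))
    (fN : ∀ i j, Fin (w i j) → (N i j →ₗ[K] N0))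
    -- the quotient morphism `π : M → N`, surjective at every vertex
    (π0 : M0 →ₗ[K] N0) (π : ∀ i j, M i j →ₗ[K] N i j)
    (hπ : ∀ i j k x, fN i j k (π i j x) = π0 (fM i j k x))
    (hsurj0 : Function.Surjective π0) (hsurj : ∀ i j, Function.Surjective (π i j))
    (hM : IsBalancedRep K w fM)
    (hθ : -(m : ℤ) * (finrank K N0 : ℤ) +
      ∑ i, ∑ j, (w i j : ℤ) * (finrank K (N i j) : ℤ) = 0) :
    IsBalancedRep K w fN :=
  quotient_theta_zero_balanced_general K m r w M0 N0 M N fM fN π0 π hπ hsurj0 hM hθ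
end

section
/- Let U = {(u₁,…,u_m) : 1 ≤ u_i ≤ r_i}, and for u ∈ U define δ_u ∈ ℚ_{≥0}^{Γ₀} by (δ_u)₀ = 1, (δ_u)_{i u_i} = 1/w_{i u_i}, and (δ_u)_{ij} = 0 for j ≠ u_i. Then every nonzero vector d in the rational cone of balanced vectors can be written as a positive rational linear combination of the vectors δ_u, u ∈ U. -/
open Finset

/-- The space of rational vectors indexed by the vertices of the generalized subspace
quiver: the first component is the value at the sink `v₀`, the second gives the values
at the sources `v_{ij}`. -/
abbrev QVec (m : ℕ) (r : Fin m → ℕ) : Type := ℚ × ((i : Fin m) → Fin (r i) → ℚ)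

/-- The extremal vector `δ_u` : value `1` at `v₀`, value `1/w_{i u_i}` at `v_{i u_i}`,
and `0` at all other vertices. -/
def delta {m : ℕ} {r : Fin m → ℕ} (w : ∀ i, Fin (r i) → ℕ) (u : ∀ i, Fin (r i)) :
    QVec m r :=
  (1, fun i j => if j = u i then ((w i (u i) : ℚ))⁻¹ else 0)

/-- A vector is balanced if `Σ_j w_{ij} d_{ij} = d₀` for every cluster `i`. -/
def IsBalancedVec {m : ℕ} {r : Fin m → ℕ} (w : ∀ i, Fin (r i) → ℕ) (x : QVec m r) : Prop :=
  ∀ i, ∑ j, (w i j : ℚ) * x.2 i j = x.1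

/-- The Euler bilinear form of the generalized subspace quiver:
`⟨d, d'⟩ = Σ_v d_v d'_v − Σ_{arrows} d_{source} d'₀`. -/
def euler {m : ℕ} {r : Fin m → ℕ} (w : ∀ i, Fin (r i) → ℕ) (x y : QVec m r) : ℚ :=
  x.1 * y.1 + ∑ i, ∑ j, x.2 i j * y.2 i j - ∑ i, ∑ j, (w i j : ℚ) * x.2 i j * y.1

/-- Every nonzero nonnegative balanced vector is a positive rational linear combination
of the vectors `δ_u`, `u ∈ U`. -/
theorem balanced_cone_generated_by_delta {m : ℕ} {r : Fin m → ℕ}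
    (w : ∀ i, Fin (r i) → ℕ) (hw : ∀ i j, 0 < w i j)
    (x : QVec m r) (hbal : IsBalancedVec w x)
    (hnn : 0 ≤ x.1 ∧ ∀ i j, 0 ≤ x.2 i j) (hne : x ≠ 0) :
    ∃ (S : Finset (∀ i, Fin (r i))) (a : (∀ i, Fin (r i)) → ℚ),
      (∀ u ∈ S, 0 < a u) ∧ x = ∑ u ∈ S, a u • delta w u := by
  obtain ⟨hx0, hx2⟩ := hnn
  have hx1 : 0 < x.1 := by
    rcases hx0.lt_or_eq with h | h
    · exact h
    · exfalso; apply hne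
      have h2 : ∀ i j, x.2 i j = 0 := by
        intro i j
        have hs := hbal i
        rw [← h] at hs
        have h3 := (Finset.sum_eq_zero_iff_of_nonneg
          (fun j _ => mul_nonneg (Nat.cast_nonneg _) (hx2 i j))).mp hs j (Finset.mem_univ j)
        have hwj : (w i j : ℚ) ≠ 0 := by
          exact_mod_cast (hw i j).ne'
        exact (mul_eq_zero.mp h3).resolve_left hwj
      have hx : x = (x.1, x.2) := rfl
      rw [hx, ← h]
      ext <;> simp [h2]
  obtain ⟨c, hc⟩ : ∃ c : ∀ i, Fin (r i) → ℚ,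
      ∀ i j, c i j = (w i j : ℚ) * x.2 i j / x.1 := ⟨_, fun _ _ => rfl⟩
  have hcsum : ∀ i, ∑ j, c i j = 1 := by
    intro i
    simp only [hc]
    rw [← Finset.sum_div, hbal i, div_self hx1.ne']
  have hcnn : ∀ i j, 0 ≤ c i j := fun i j => by
    rw [hc]
    exact div_nonneg (mul_nonneg (Nat.cast_nonneg _) (hx2 i j)) hx1.le
  obtain ⟨a, ha⟩ : ∃ a : (∀ i, Fin (r i)) → ℚ,
      ∀ u, a u = x.1 * ∏ i, c i (u i) := ⟨_, fun _ => rfl⟩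
  have hann : ∀ u, 0 ≤ a u := fun u => by
    rw [ha]
    exact mul_nonneg hx1.le (Finset.prod_nonneg fun i _ => hcnn i (u i))
  have key : x = ∑ u, a u • delta w u := by
    apply Prod.ext
    · rw [Prod.fst_sum]
      simp only [Prod.smul_fst, delta, smul_eq_mul, mul_one, ha]
      rw [← Finset.mul_sum]
      have hps := Finset.prod_univ_sum (fun i => (Finset.univ : Finset (Fin (r i))))
        (fun i j => c i j)
      rw [Fintype.piFinset_univ] at hps
      rw [← hps]
      simp [hcsum]
    · funext i j
      rw [Prod.snd_sum]
      rw [Finset.sum_apply, Finset.sum_apply]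
      have hwj : (w i j : ℚ) ≠ 0 := by exact_mod_cast (hw i j).ne'
      obtain ⟨χ, hχ⟩ : ∃ χ : ∀ i', Fin (r i') → ℚ, ∀ i' j',
          χ i' j' = if h : i' = i then (if (h ▸ j' : Fin (r i)) = j then 1 else 0) else 1 :=
        ⟨_, fun _ _ => rfl⟩
      have hterm : ∀ u, (a u • delta w u).2 i j
          = x.1 * (w i j : ℚ)⁻¹ * ∏ i', (c i' (u i') * χ i' (u i')) := by
        intro u
        have hprodχ : ∏ i', χ i' (u i') = if u i = j then 1 else 0 := by
          rw [Finset.prod_eq_single_of_mem i (Finset.mem_univ i)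
            (fun b _ hb => by rw [hχ, dif_neg hb])]
          rw [hχ, dif_pos rfl]
        rw [Finset.prod_mul_distrib, hprodχ]
        simp only [delta, Prod.smul_snd, Pi.smul_apply, smul_eq_mul, ha]
        by_cases hj : j = u i
        · subst hj
          rw [if_pos rfl, if_pos rfl]
          ring
        · rw [if_neg hj, if_neg (fun h => hj h.symm)]
          ring
      rw [Finset.sum_congr rfl (fun u _ => hterm u), ← Finset.mul_sum]
      have hps := Finset.prod_univ_sum (fun i' => (Finset.univ : Finset (Fin (r i'))))
        (fun i' j' => c i' j' * χ i' j')
      rw [Fintype.piFinset_univ] at hps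
      rw [← hps]
      have hfac : ∏ i', ∑ j', c i' j' * χ i' j' = c i j := by
        rw [Finset.prod_eq_single_of_mem i (Finset.mem_univ i)
          (fun b _ hb => by
            simp only [hχ, dif_neg hb, mul_one]
            exact hcsum b)]
        simp only [hχ, dif_pos rfl]
        simp [Finset.sum_ite_eq']
      rw [hfac, hc]
      field_simp
  refine ⟨Finset.univ.filter (fun u => 0 < a u), a,
    fun u hu => (Finset.mem_filter.mp hu).2, ?_⟩
  rw [key]
  refine (Finset.sum_subset (Finset.filter_subset _ _) ?_).symm
  intro u _ hu
  have h0 : a u = 0 := le_antisymm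
    (by simpa [Finset.mem_filter, not_lt] using hu) (hann u)
  simp [h0]
end

section
/- For u, v ∈ U, the Euler form satisfies ⟨δ_u, δ_v⟩ = Σ_{i : u_i = v_i} 1/w_{i u_i}² − (m−1). In particular, for distinct u, v: ⟨δ_u, δ_v⟩ ≤ 0, with equality if and only if u_i = v_i for all but one index i and w_{i u_i} = 1 whenever u_i = v_i. -/
open Finset

/-- `⟨δ_u, δ_v⟩ = Σ_{i : u_i = v_i} 1/w_{i u_i}² − (m−1)`; for distinct `u, v` this is
`≤ 0`, with equality iff `u` and `v` agree in all but one coordinate and the weights at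
agreeing coordinates are trivial. -/
theorem euler_delta_delta {m : ℕ} {r : Fin m → ℕ}
    (w : ∀ i, Fin (r i) → ℕ) (hw : ∀ i j, 0 < w i j)
    (u v : ∀ i, Fin (r i)) :
    euler w (delta w u) (delta w v) =
      (∑ i ∈ univ.filter (fun i => u i = v i), ((w i (u i) : ℚ))⁻¹ ^ 2) - ((m : ℚ) - 1) ∧
    (u ≠ v →
      euler w (delta w u) (delta w v) ≤ 0 ∧
      (euler w (delta w u) (delta w v) = 0 ↔
        (∃! i, u i ≠ v i) ∧ ∀ i, u i = v i → w i (u i) = 1)) := by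
  have hval : euler w (delta w u) (delta w v) =
      (∑ i ∈ univ.filter (fun i => u i = v i), ((w i (u i) : ℚ))⁻¹ ^ 2) - ((m : ℚ) - 1) := by
    simp only [euler, delta, mul_one]
    have h1 : ∀ i : Fin m, ∑ j, (if j = u i then ((w i (u i):ℚ))⁻¹ else 0) * (if j = v i then ((w i (v i):ℚ))⁻¹ else 0)
        = if u i = v i then ((w i (u i):ℚ))⁻¹ ^ 2 else 0 := by
      intro i
      rw [Finset.sum_eq_single (u i)]
      · by_cases h : u i = v i <;> simp [h, sq]
      · intro b _ hb; simp [hb]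
      · simp
    have h2 : ∀ i : Fin m, ∑ j, (w i j : ℚ) * (if j = u i then ((w i (u i):ℚ))⁻¹ else 0) = 1 := by
      intro i
      rw [Finset.sum_eq_single (u i)]
      · rw [if_pos rfl]; have := hw i (u i); field_simp
      · intro b _ hb; simp [hb]
      · simp
    simp only [h1, h2, Finset.sum_const, Finset.card_univ, Fintype.card_fin, nsmul_eq_mul, mul_one]
    rw [Finset.sum_filter]
    ring
  refine ⟨hval, fun huv => ?_⟩
  set S : Finset (Fin m) := univ.filter (fun i => u i = v i) with hS
  set T : Finset (Fin m) := univ.filter (fun i => ¬ u i = v i) with hT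
  have hcard : S.card + T.card = m := by
    rw [hS, hT, Finset.card_filter_add_card_filter_not, Finset.card_univ,
      Fintype.card_fin]
  have hTne : T.Nonempty := by
    obtain ⟨i, hi⟩ := Function.ne_iff.mp huv
    exact ⟨i, by simp [hT, hi]⟩
  have hT1 : 1 ≤ T.card := Finset.card_pos.mpr hTne
  have hterm1 : ∀ i ∈ S, ((w i (u i) : ℚ))⁻¹ ^ 2 ≤ 1 := by
    intro i _
    have h1 : (1:ℚ) ≤ (w i (u i) : ℚ) := by exact_mod_cast hw i (u i)
    have h0 : (0:ℚ) < (w i (u i) : ℚ) := by positivity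
    have : ((w i (u i) : ℚ))⁻¹ ≤ 1 := by
      rw [inv_le_one_iff₀]; right; exact h1
    have hnn : (0:ℚ) ≤ ((w i (u i) : ℚ))⁻¹ := by positivity
    calc ((w i (u i) : ℚ))⁻¹ ^ 2 ≤ 1 ^ 2 := by
          exact pow_le_pow_left₀ hnn this 2
      _ = 1 := one_pow 2
  have hsum_le : (∑ i ∈ S, ((w i (u i) : ℚ))⁻¹ ^ 2) ≤ S.card := by
    calc (∑ i ∈ S, ((w i (u i) : ℚ))⁻¹ ^ 2) ≤ ∑ _i ∈ S, (1:ℚ) :=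
          Finset.sum_le_sum hterm1
      _ = S.card := by simp
  have hcard_le : (S.card : ℚ) ≤ (m : ℚ) - 1 := by
    have : S.card + 1 ≤ m := by omega
    have := (Nat.cast_le (α := ℚ)).mpr this
    push_cast at this; linarith
  constructor
  · rw [hval]; linarith
  rw [hval, sub_eq_zero]
  constructor
  · intro heq
    -- equality: sum = m - 1, so S.card = m-1 and all terms = 1
    have hSc : (S.card : ℚ) = (m : ℚ) - 1 := le_antisymm hcard_le (by linarith)
    have hScn : S.card = m - 1 := by
      have hm : 1 ≤ m := by omega
      have : (S.card : ℚ) = ((m - 1 : ℕ) : ℚ) := by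
        rw [hSc]; push_cast [hm]; ring
      exact_mod_cast this
    have hTc : T.card = 1 := by omega
    have hall : ∀ i ∈ S, ((w i (u i) : ℚ))⁻¹ ^ 2 = 1 := by
      by_contra hc
      push_neg at hc
      obtain ⟨i, hiS, hine⟩ := hc
      have hlt : ((w i (u i) : ℚ))⁻¹ ^ 2 < 1 := lt_of_le_of_ne (hterm1 i hiS) hine
      have : (∑ i ∈ S, ((w i (u i) : ℚ))⁻¹ ^ 2) < ∑ _i ∈ S, (1:ℚ) :=
        Finset.sum_lt_sum (fun j hj => hterm1 j hj) ⟨i, hiS, hlt⟩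
      simp only [Finset.sum_const, nsmul_eq_mul, mul_one] at this
      rw [heq, hSc] at this
      linarith
    constructor
    · obtain ⟨a, ha⟩ := Finset.card_eq_one.mp hTc
      refine ⟨a, ?_, ?_⟩
      · have : a ∈ T := by rw [ha]; exact Finset.mem_singleton_self a
        simpa [hT] using this
      · intro b hb
        have : b ∈ T := by simp [hT, hb]
        rw [ha] at this
        exact Finset.mem_singleton.mp this
    · intro i hi
      have hiS : i ∈ S := by simp [hS, hi]
      have := hall i hiS
      have h0 : (0:ℚ) < (w i (u i) : ℚ) := by exact_mod_cast hw i (u i)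
      have hinv : ((w i (u i) : ℚ))⁻¹ = 1 := by
        nlinarith [sq_nonneg (((w i (u i) : ℚ))⁻¹ - 1), sq_nonneg (((w i (u i) : ℚ))⁻¹ + 1), inv_pos.mpr h0]
      have : (w i (u i) : ℚ) = 1 := by
        field_simp at hinv; exact hinv.symm
      exact_mod_cast this
  · rintro ⟨⟨a, ha, huniq⟩, hwone⟩
    have hTa : T = {a} := by
      ext b
      simp only [hT, Finset.mem_filter, Finset.mem_univ, true_and, Finset.mem_singleton]
      exact ⟨fun hb => huniq b hb, fun hb => hb ▸ ha⟩
    have hTc : T.card = 1 := by rw [hTa]; simp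
    have hScn : S.card = m - 1 := by omega
    have hall : ∀ i ∈ S, ((w i (u i) : ℚ))⁻¹ ^ 2 = 1 := by
      intro i hi
      have : u i = v i := by simpa [hS] using hi
      rw [hwone i this]; norm_num
    rw [Finset.sum_congr rfl hall]
    simp only [Finset.sum_const, nsmul_eq_mul, mul_one]
    rw [hScn]
    have hm : 1 ≤ m := by omega
    push_cast [hm]; ring
end

section
/- For u ∈ U: ⟨δ_u, δ_u⟩ < 0 if and only if at least two of the weights w_{1 u_1}, …, w_{m u_m} are greater than 1, and ⟨δ_u, δ_u⟩ > 0 if and only if at most one of these weights is greater than 1. In particular ⟨δ_u, δ_u⟩ is never 0. -/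
/-!
Since `Σ_j w_{ij} (δ_u)_{ij} = 1` for every cluster, `⟨δ_u, δ_u⟩ = 1 - Σ_i (1 - 1/w_{i u_i}²)`.
A weight `1` contributes nothing to this sum and a weight `w ≥ 2` contributes a number in
`[3/4, 1)`. Hence the sum is below `1` when at most one weight exceeds `1`, and above `1`
as soon as two do.
-/

open Finset

namespace Finset

variable {ι K : Type*} [CommRing K] [LinearOrder K] [IsStrictOrderedRing K] {s : Finset ι} {f : ι → K}

theorem sum_lt_one_of_card_le_one (h : ∀ i ∈ s, f i < 1) (hs : #s ≤ 1) : ∑ i ∈ s, f i < 1 := by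
  rcases s.eq_empty_or_nonempty with rfl | hne
  · simp
  · obtain ⟨a, rfl⟩ := card_eq_one.mp (le_antisymm hs hne.card_pos)
    simpa using h a (mem_singleton_self a)

theorem one_lt_sum_of_two_le_card {a : K} (ha : 1 < 2 * a) (h : ∀ i ∈ s, a ≤ f i)
    (hs : 2 ≤ #s) : 1 < ∑ i ∈ s, f i :=
  calc 1 < 2 * a := ha
    _ ≤ #s * a := by gcongr <;> [linarith; exact_mod_cast hs]
    _ ≤ ∑ i ∈ s, f i := by simpa using card_nsmul_le_sum s f a h

end Finset

theorem one_sub_inv_sq_lt_one {n : ℕ} (hn : 0 < n) : 1 - ((n : ℚ)⁻¹) ^ 2 < 1 := by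
  have : (0 : ℚ) < n := by exact_mod_cast hn
  simp only [sub_lt_self_iff]
  positivity

theorem three_quarters_le_one_sub_inv_sq {n : ℕ} (hn : 1 < n) : 3 / 4 ≤ 1 - ((n : ℚ)⁻¹) ^ 2 := by
  have h2 : (2 : ℚ) ≤ n := by exact_mod_cast hn
  have hinv : (n : ℚ)⁻¹ ≤ 1 / 2 := by
    rw [inv_le_comm₀ (by linarith) (by norm_num)]
    linarith
  nlinarith [inv_nonneg.mpr (by linarith : (0 : ℚ) ≤ n)]

section Quiver

variable {m : ℕ} {r : Fin m → ℕ} {w : ∀ i, Fin (r i) → ℕ}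

theorem isBalancedVec_delta (hw : ∀ i j, 0 < w i j) (u : ∀ i, Fin (r i)) :
    IsBalancedVec w (delta w u) := by
  intro i
  have hne : (w i (u i) : ℚ) ≠ 0 := by exact_mod_cast (hw i (u i)).ne'
  simp [delta, mul_ite, mul_inv_cancel₀ hne]

theorem euler_self_of_isBalancedVec {x : QVec m r} (hx : IsBalancedVec w x) :
    euler w x x = ∑ i, ∑ j, x.2 i j ^ 2 - (m - 1) * x.1 ^ 2 := by
  have harrows : ∑ i, ∑ j, (w i j : ℚ) * x.2 i j * x.1 = m * x.1 ^ 2 := by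
    simp only [← sum_mul, show ∀ i, ∑ j, (w i j : ℚ) * x.2 i j = x.1 from hx]
    simp [sq, mul_assoc]
  rw [euler, harrows]
  simp only [sq]
  ring

theorem euler_delta_self_eq_one_sub_sum (hw : ∀ i j, 0 < w i j) (u : ∀ i, Fin (r i)) :
    euler w (delta w u) (delta w u) = 1 - ∑ i, (1 - ((w i (u i) : ℚ)⁻¹) ^ 2) := by
  rw [euler_self_of_isBalancedVec (isBalancedVec_delta hw u)]
  have hsq : ∀ i, ∑ j, (delta w u).2 i j ^ 2 = ((w i (u i) : ℚ)⁻¹) ^ 2 := fun i => by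
    simp [delta]
  simp only [hsq, sum_sub_distrib, sum_const, card_univ, Fintype.card_fin, nsmul_eq_mul]
  simp only [delta]
  ring

theorem euler_delta_self_eq_one_sub_sum_filter (hw : ∀ i j, 0 < w i j) (u : ∀ i, Fin (r i)) :
    euler w (delta w u) (delta w u) =
      1 - ∑ i ∈ univ.filter (fun i => 1 < w i (u i)), (1 - ((w i (u i) : ℚ)⁻¹) ^ 2) := by
  rw [euler_delta_self_eq_one_sub_sum hw, sum_filter_of_ne]
  intro i _ hi
  by_contra hle
  have hone : w i (u i) = 1 := by have := hw i (u i); omega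
  simp [hone] at hi

end Quiver

/-- `⟨δ_u, δ_u⟩ < 0` iff at least two of the weights `w_{i u_i}` exceed `1`;
`⟨δ_u, δ_u⟩ > 0` iff at most one of them exceeds `1`; and `⟨δ_u, δ_u⟩ ≠ 0`. -/
theorem euler_delta_self {m : ℕ} {r : Fin m → ℕ}
    (w : ∀ i, Fin (r i) → ℕ) (hw : ∀ i j, 0 < w i j)
    (u : ∀ i, Fin (r i)) :
    (euler w (delta w u) (delta w u) < 0 ↔
      2 ≤ (univ.filter (fun i => 1 < w i (u i))).card) ∧
    (0 < euler w (delta w u) (delta w u) ↔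
      (univ.filter (fun i => 1 < w i (u i))).card ≤ 1) ∧
    euler w (delta w u) (delta w u) ≠ 0 := by
  rw [euler_delta_self_eq_one_sub_sum_filter hw]
  set F := univ.filter (fun i => 1 < w i (u i))
  have hneg : 2 ≤ #F → 1 < ∑ i ∈ F, (1 - ((w i (u i) : ℚ)⁻¹) ^ 2) :=
    one_lt_sum_of_two_le_card (a := 3 / 4) (by norm_num)
      fun i hi => three_quarters_le_one_sub_inv_sq (mem_filter.mp hi).2
  have hpos : #F ≤ 1 → ∑ i ∈ F, (1 - ((w i (u i) : ℚ)⁻¹) ^ 2) < 1 :=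
    sum_lt_one_of_card_le_one fun i _ => one_sub_inv_sq_lt_one (hw i (u i))
  refine ⟨⟨fun h => ?_, fun h => by linarith [hneg h]⟩,
    ⟨fun h => ?_, fun h => by linarith [hpos h]⟩, fun h => ?_⟩
  · by_contra hc
    linarith [hpos (by omega)]
  · by_contra hc
    linarith [hneg (by omega)]
  · rcases le_or_gt #F 1 with hc | hc
    · linarith [hpos hc]
    · linarith [hneg hc]
end

section
/- Let d be a balanced isotropic vector (⟨d,d⟩ = 0) of the generalized subspace quiver with d₀ = n, such that ⟨d, δ_u⟩ ≤ 0 for every u ∈ U, and suppose d_{ij} ≠ n for all i,j. Then m = 2, and for each of the two clusters i there is a value q_i = n/2 such that every nonzero d_{ij}/w_{ij} equals n/2; moreover d is special isotropic: exactly four entries d_{ij} are nonzero, each equal to n/2, with the corresponding weights w_{ij} equal to 1. -/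
open Finset

/-- If `d` is a balanced isotropic dimension vector with `d₀ = n > 0`, `⟨d, δ_u⟩ ≤ 0`
for every `u ∈ U`, and `d_{ij} ≠ n` for all `i, j`, then `d` is special isotropic:
`m = 2`, every nonzero `d_{ij}/w_{ij}` equals `n/2`, and exactly four entries `d_{ij}`
are nonzero, each equal to `n/2` with trivial weight. -/
theorem isotropic_is_special {m : ℕ} {r : Fin m → ℕ}
    (w : ∀ i, Fin (r i) → ℕ) (hw : ∀ i j, 0 < w i j)
    (d0 : ℕ) (dv : ∀ i, Fin (r i) → ℕ) (hn : 0 < d0)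
    (hbal : ∀ i, ∑ j, w i j * dv i j = d0)
    (hiso : euler w ((d0 : ℚ), fun i j => (dv i j : ℚ)) ((d0 : ℚ), fun i j => (dv i j : ℚ)) = 0)
    (hle : ∀ u : ∀ i, Fin (r i),
      euler w ((d0 : ℚ), fun i j => (dv i j : ℚ)) (delta w u) ≤ 0)
    (hnotn : ∀ i j, dv i j ≠ d0) :
    m = 2 ∧
    (∀ i j, dv i j ≠ 0 → (dv i j : ℚ) / (w i j : ℚ) = (d0 : ℚ) / 2) ∧
    (univ.filter (fun p : (i : Fin m) × Fin (r i) => dv p.1 p.2 ≠ 0)).card = 4 ∧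
    (∀ i j, dv i j ≠ 0 → 2 * dv i j = d0 ∧ w i j = 1) := by
  -- basic positivity facts
  have hwQ : ∀ i j, (0:ℚ) < (w i j : ℚ) := fun i j => by exact_mod_cast hw i j
  have hnQ : (0:ℚ) < (d0:ℚ) := by exact_mod_cast hn
  have hr : ∀ i, 0 < r i := by
    intro i
    rcases Nat.eq_zero_or_pos (r i) with h | h
    · exfalso
      have he : IsEmpty (Fin (r i)) := by rw [h]; infer_instance
      have hb := hbal i
      rw [Finset.univ_eq_empty, Finset.sum_empty] at hb
      omega
    · exact h
  have hbalQ : ∀ i, ∑ j, (w i j:ℚ) * (dv i j:ℚ) = (d0:ℚ) := by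
    intro i
    rw [← hbal i]
    push_cast
    rfl
  -- third sum of the euler form
  have h3 : ∀ c : ℚ, ∑ i : Fin m, ∑ j, (w i j:ℚ) * (dv i j:ℚ) * c = (m:ℚ) * ((d0:ℚ) * c) := by
    intro c
    have hinner : ∀ i, ∑ j, (w i j:ℚ) * (dv i j:ℚ) * c = (d0:ℚ) * c := fun i => by
      rw [← Finset.sum_mul, hbalQ i]
    rw [Finset.sum_congr rfl (fun i _ => hinner i)]
    simp [Finset.sum_const, mul_comm]
  -- isotropy gives the sum of squares
  have hiso' : ∑ i : Fin m, ∑ j, (dv i j:ℚ) * (dv i j:ℚ) = ((m:ℚ) - 1) * ((d0:ℚ) * (d0:ℚ)) := by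
    simp only [euler] at hiso
    rw [h3 (d0:ℚ)] at hiso
    linarith [hiso]
  -- choose maximizers
  have hne : ∀ i, (univ : Finset (Fin (r i))).Nonempty := fun i => ⟨⟨0, hr i⟩, mem_univ _⟩
  choose u hu hmax using fun i =>
    Finset.exists_max_image (univ : Finset (Fin (r i))) (fun j => (dv i j:ℚ) / (w i j:ℚ)) (hne i)
  set M : Fin m → ℚ := fun i => (dv i (u i):ℚ) / (w i (u i):ℚ) with hM
  have hmax' : ∀ i j, (dv i j:ℚ) / (w i j:ℚ) ≤ M i := fun i j => hmax i j (mem_univ j)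
  -- the delta inequality for the maximizer
  have hleQ : ∑ i : Fin m, M i ≤ ((m:ℚ) - 1) * (d0:ℚ) := by
    have h := hle u
    simp only [euler, delta] at h
    rw [h3 1] at h
    simp only [mul_ite, mul_inv_eq_iff_eq_mul, mul_zero, Finset.sum_ite_eq', mem_univ, if_true,
      mul_one] at h
    have hmid : ∑ i : Fin m, (dv i (u i):ℚ) * ((w i (u i):ℚ))⁻¹ = ∑ i : Fin m, M i := by
      refine Finset.sum_congr rfl fun i _ => ?_
      simp only [hM]
      rw [div_eq_mul_inv]
    rw [hmid] at h
    linarith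
  -- pointwise inequality
  have hpoint : ∀ i j, (dv i j:ℚ) * (dv i j:ℚ) ≤ M i * ((w i j:ℚ) * (dv i j:ℚ)) := by
    intro i j
    have hwne : (w i j:ℚ) ≠ 0 := ne_of_gt (hwQ i j)
    have h1 : (dv i j:ℚ) * (dv i j:ℚ) = ((dv i j:ℚ) / (w i j:ℚ)) * ((w i j:ℚ) * (dv i j:ℚ)) := by
      field_simp
    rw [h1]
    exact mul_le_mul_of_nonneg_right (hmax' i j) (by positivity)
  have hinnerle : ∀ i, ∑ j, (dv i j:ℚ) * (dv i j:ℚ) ≤ M i * (d0:ℚ) := by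
    intro i
    calc ∑ j, (dv i j:ℚ) * (dv i j:ℚ) ≤ ∑ j, M i * ((w i j:ℚ) * (dv i j:ℚ)) :=
          Finset.sum_le_sum fun j _ => hpoint i j
      _ = M i * (d0:ℚ) := by rw [← Finset.mul_sum, hbalQ i]
  -- equality everywhere
  have hBle : ∑ i : Fin m, M i * (d0:ℚ) ≤ ((m:ℚ) - 1) * ((d0:ℚ) * (d0:ℚ)) := by
    rw [← Finset.sum_mul]
    calc (∑ i : Fin m, M i) * (d0:ℚ) ≤ (((m:ℚ) - 1) * (d0:ℚ)) * (d0:ℚ) :=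
          mul_le_mul_of_nonneg_right hleQ (le_of_lt hnQ)
      _ = ((m:ℚ) - 1) * ((d0:ℚ) * (d0:ℚ)) := by ring
  have hEq : ∑ i : Fin m, ∑ j, (dv i j:ℚ) * (dv i j:ℚ) = ∑ i : Fin m, M i * (d0:ℚ) :=
    le_antisymm (Finset.sum_le_sum fun i _ => hinnerle i) (by rw [hiso']; exact hBle)
  have hinnerEq : ∀ i, ∑ j, (dv i j:ℚ) * (dv i j:ℚ) = M i * (d0:ℚ) := by
    intro i
    exact (Finset.sum_eq_sum_iff_of_le (fun i _ => hinnerle i)).mp hEq i (mem_univ i)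
  have hMsum : ∑ i : Fin m, M i = ((m:ℚ) - 1) * (d0:ℚ) := by
    have h1 : ∑ i : Fin m, M i * (d0:ℚ) = ((m:ℚ) - 1) * ((d0:ℚ) * (d0:ℚ)) := by
      rw [← hEq, hiso']
    rw [← Finset.sum_mul] at h1
    have h2 : (∑ i : Fin m, M i) * (d0:ℚ) = (((m:ℚ) - 1) * (d0:ℚ)) * (d0:ℚ) := by
      rw [h1]; ring
    exact mul_right_cancel₀ (ne_of_gt hnQ) h2
  have hpointEq : ∀ i j, (dv i j:ℚ) * (dv i j:ℚ) = M i * ((w i j:ℚ) * (dv i j:ℚ)) := by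
    intro i j
    have h1 : ∑ j, (dv i j:ℚ) * (dv i j:ℚ) = ∑ j, M i * ((w i j:ℚ) * (dv i j:ℚ)) := by
      rw [hinnerEq i, ← Finset.mul_sum, hbalQ i]
    exact (Finset.sum_eq_sum_iff_of_le (fun j _ => hpoint i j)).mp h1 j (mem_univ j)
  -- nonzero entries satisfy dv = M * w
  have hdvM : ∀ i j, dv i j ≠ 0 → (dv i j:ℚ) = M i * (w i j:ℚ) := by
    intro i j hj
    have hj' : (dv i j:ℚ) ≠ 0 := Nat.cast_ne_zero.mpr hj
    have h := hpointEq i j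
    have h2 : (dv i j:ℚ) * (dv i j:ℚ) = (M i * (w i j:ℚ)) * (dv i j:ℚ) := by rw [h]; ring
    exact mul_right_cancel₀ hj' h2
  -- the natural number S_i
  set Sn : Fin m → ℕ := fun i => ∑ j ∈ univ.filter (fun j => dv i j ≠ 0), (w i j)^2 with hSn
  have hMS : ∀ i, (d0:ℚ) = M i * (Sn i:ℚ) := by
    intro i
    rw [← hbalQ i, ← Finset.sum_filter_add_sum_filter_not univ (fun j => dv i j ≠ 0)]
    have h0 : ∑ j ∈ univ.filter (fun j => ¬ dv i j ≠ 0), (w i j:ℚ) * (dv i j:ℚ) = 0 := by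
      refine Finset.sum_eq_zero fun j hj => ?_
      have : dv i j = 0 := by simpa using (mem_filter.mp hj).2
      rw [this]; simp
    rw [h0, add_zero, hSn]
    push_cast
    rw [Finset.mul_sum]
    refine Finset.sum_congr rfl fun j hj => ?_
    rw [hdvM i j (mem_filter.mp hj).2]
    ring
  have hSnne : ∀ i, Sn i ≠ 0 := by
    intro i h
    have h0 := hMS i
    rw [h] at h0
    norm_num at h0
    exact hn.ne' (by exact_mod_cast h0)
  -- S_i ≥ 2
  have hS2 : ∀ i, 2 ≤ Sn i := by
    intro i
    by_contra h
    push_neg at h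
    have hS1 : Sn i = 1 := by have := hSnne i; omega
    obtain ⟨j, hjj⟩ : ∃ j, dv i j ≠ 0 := by
      by_contra hc
      push_neg at hc
      have hz : ∑ j, w i j * dv i j = 0 :=
        Finset.sum_eq_zero (fun j _ => by rw [hc j, mul_zero])
      have hb := hbal i
      omega
    have hj : j ∈ univ.filter (fun j => dv i j ≠ 0) := mem_filter.mpr ⟨mem_univ j, hjj⟩
    have hwle : (w i j)^2 ≤ Sn i := by
      simp only [hSn]
      exact Finset.single_le_sum (f := fun j => (w i j)^2) (fun j _ => Nat.zero_le _) hj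
    have hwj : w i j = 1 := by nlinarith [hw i j]
    have hdvj : dv i j ≠ 0 := (mem_filter.mp hj).2
    have : (dv i j:ℚ) = (d0:ℚ) := by
      rw [hdvM i j hdvj, hwj]
      have := hMS i
      rw [hS1] at this
      push_cast at this ⊢
      linarith [this]
    exact hnotn i j (by exact_mod_cast this)
  have hMval : ∀ i, M i = (d0:ℚ) / (Sn i:ℚ) := by
    intro i
    have hS : ((Sn i:ℚ)) ≠ 0 := by
      have := hSnne i; positivity
    rw [eq_div_iff hS, ← hMS i]
  -- sum of reciprocals
  have hrecip : ∑ i : Fin m, ((Sn i:ℚ))⁻¹ = (m:ℚ) - 1 := by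
    have h1 : ∑ i : Fin m, (d0:ℚ) * ((Sn i:ℚ))⁻¹ = ((m:ℚ) - 1) * (d0:ℚ) := by
      rw [← hMsum]
      refine Finset.sum_congr rfl fun i _ => ?_
      rw [hMval i, div_eq_mul_inv]
    rw [← Finset.mul_sum] at h1
    have h2 : (d0:ℚ) * ∑ i : Fin m, ((Sn i:ℚ))⁻¹ = (d0:ℚ) * ((m:ℚ) - 1) := by linarith [h1]
    exact mul_left_cancel₀ (ne_of_gt hnQ) h2
  have hhalf : ∀ i, ((Sn i:ℚ))⁻¹ ≤ 1/2 := by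
    intro i
    have h2 : (2:ℚ) ≤ (Sn i:ℚ) := by exact_mod_cast hS2 i
    rw [inv_le_comm₀ (by linarith) (by norm_num)]
    linarith
  -- m = 2
  have hm : m = 2 := by
    have hub : (m:ℚ) - 1 ≤ (m:ℚ) * (1/2) := by
      rw [← hrecip]
      calc ∑ i : Fin m, ((Sn i:ℚ))⁻¹ ≤ ∑ i : Fin m, (1/2:ℚ) :=
            Finset.sum_le_sum fun i _ => hhalf i
        _ = (m:ℚ) * (1/2) := by simp [Finset.sum_const, mul_comm]
    have hmle : m ≤ 2 := by
      by_contra h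
      push_neg at h
      have : (3:ℚ) ≤ (m:ℚ) := by exact_mod_cast h
      linarith
    interval_cases m
    · simp at hrecip
    · exfalso
      have h1 : ∑ i : Fin 1, ((Sn i:ℚ))⁻¹ = ((Sn 0:ℚ))⁻¹ := by simp
      rw [h1] at hrecip
      have : (0:ℚ) < ((Sn 0:ℚ))⁻¹ := by
        have := hSnne 0
        positivity
      norm_num at hrecip
      rw [hrecip] at this
      norm_num at this
    · rfl
  -- each Sn i = 2
  have hSn2 : ∀ i, Sn i = 2 := by
    intro i
    by_contra h
    have h3 : 3 ≤ Sn i := by have := hS2 i; omega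
    have hi : ((Sn i:ℚ))⁻¹ < 1/2 := by
      have h3' : (3:ℚ) ≤ (Sn i:ℚ) := by exact_mod_cast h3
      rw [inv_lt_comm₀ (by linarith) (by norm_num)]
      linarith
    have hlt : ∑ i' : Fin m, ((Sn i':ℚ))⁻¹ < ∑ i' : Fin m, (1/2:ℚ) :=
      Finset.sum_lt_sum (fun i' _ => hhalf i') ⟨i, mem_univ i, hi⟩
    rw [hrecip] at hlt
    have hc : ∑ i' : Fin m, (1/2:ℚ) = (m:ℚ) * (1/2) := by simp [Finset.sum_const, mul_comm]
    rw [hc, hm] at hlt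
    norm_num at hlt
  have hM2 : ∀ i, M i = (d0:ℚ) / 2 := by
    intro i
    rw [hMval i, hSn2 i]
    norm_num
  -- trivial weights
  have hw1 : ∀ i j, dv i j ≠ 0 → w i j = 1 := by
    intro i j hj
    have hjf : j ∈ univ.filter (fun j => dv i j ≠ 0) := mem_filter.mpr ⟨mem_univ j, hj⟩
    have hwle : (w i j)^2 ≤ Sn i := by
      simp only [hSn]
      exact Finset.single_le_sum (f := fun j => (w i j)^2) (fun j _ => Nat.zero_le _) hjf
    rw [hSn2 i] at hwle
    nlinarith [hw i j]
  have hdvhalf : ∀ i j, dv i j ≠ 0 → 2 * dv i j = d0 := by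
    intro i j hj
    have h1 : (dv i j:ℚ) = (d0:ℚ)/2 := by
      rw [hdvM i j hj, hw1 i j hj, hM2 i]
      norm_num
    have : (2:ℚ) * (dv i j:ℚ) = (d0:ℚ) := by linarith
    exact_mod_cast this
  -- cardinality per cluster
  have hcard : ∀ i, (univ.filter (fun j => dv i j ≠ 0)).card = 2 := by
    intro i
    have h1 : Sn i = ∑ _j ∈ univ.filter (fun j => dv i j ≠ 0), 1 := by
      simp only [hSn]
      refine Finset.sum_congr rfl fun j hj => ?_
      rw [hw1 i j (mem_filter.mp hj).2, one_pow]
    have h2 := hSn2 i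
    rw [h1] at h2
    rw [Finset.card_eq_sum_ones]
    exact h2
  -- total count = 4
  have hcard4 : (univ.filter (fun p : (i : Fin m) × Fin (r i) => dv p.1 p.2 ≠ 0)).card = 4 := by
    have hsig : (univ.filter (fun p : (i : Fin m) × Fin (r i) => dv p.1 p.2 ≠ 0)) =
        (univ : Finset (Fin m)).sigma (fun i => univ.filter (fun j => dv i j ≠ 0)) := by
      ext ⟨i, j⟩
      simp [Finset.mem_sigma]
    rw [hsig, Finset.card_sigma]
    rw [Finset.sum_congr rfl (fun i _ => hcard i)]
    simp [hm]
  refine ⟨hm, ?_, hcard4, fun i j hj => ⟨hdvhalf i j hj, hw1 i j hj⟩⟩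
  intro i j hj
  rw [hdvM i j hj, hw1 i j hj, hM2 i]
  norm_num
end

section
/- A special isotropic dimension vector d (with d₀ = n) of the generalized subspace quiver is isotropic for the Euler form, i.e., ⟨d, d⟩ = 0; and d is indivisible (its entries have no common factor > 1) if and only if n = 2. -/
/-!
Balance forces every entry `x` of weight `w` to satisfy `w * x ≤ n`, so an entry is `0`, or `n` with
weight `1`, or (by hypothesis) `n / 2` with weight `1`. In the Euler form `Σ_{ij} w_{ij} d_{ij} n - Σ d_{ij}²`
the first two kinds contribute nothing and each of the four half entries contributes `(n/2)²`, which
cancels `n²`. All entries are multiples of `n / 2`, and an entry equal to `n / 2` exists, so the vector is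
indivisible exactly when `n / 2 = 1`.
-/

open Finset

theorem eq_and_eq_one_of_mul_le {n w x : ℕ} (hw : 0 < w) (hx : 0 < x) (hle : w * x ≤ n)
    (hnx : n ≤ x) : x = n ∧ w = 1 := by
  have hxn : x = n := le_antisymm ((Nat.le_mul_of_pos_left x hw).trans hle) hnx
  subst hxn
  exact ⟨rfl, by nlinarith⟩

theorem special_entry_cases {n k w x : ℕ} (hk : 2 * k = n) (hw : 0 < w) (hle : w * x ≤ n)
    (hhalf : 0 < x → x < n → 2 * x = n ∧ w = 1) :
    x = 0 ∨ (x = n ∧ w = 1) ∨ (x = k ∧ w = 1) := by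
  rcases Nat.eq_zero_or_pos x with hx0 | hx0
  · exact Or.inl hx0
  rcases lt_or_ge x n with hxn | hnx
  · obtain ⟨h2x, hw1⟩ := hhalf hx0 hxn
    exact Or.inr (Or.inr ⟨by omega, hw1⟩)
  · exact Or.inr (Or.inl (eq_and_eq_one_of_mul_le hw hx0 hle hnx))

section SpecialEntries

variable {ι : Type*} {n k : ℕ} {x : ι → ℕ}

theorem sum_mul_sub_sq_eq_card_mul_sq [Fintype ι] (w : ι → ℕ) (hk : 2 * k = n)
    (hx : ∀ i, x i = 0 ∨ (x i = n ∧ w i = 1) ∨ (x i = k ∧ w i = 1)) :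
    ∑ i, ((w i : ℤ) * x i * n - (x i : ℤ) ^ 2) = #{i | 0 < x i ∧ x i < n} * (k : ℤ) ^ 2 := by
  have hterm : ∀ i, (w i : ℤ) * x i * n - (x i : ℤ) ^ 2 =
      if 0 < x i ∧ x i < n then (k : ℤ) ^ 2 else 0 := by
    intro i
    have hn : (n : ℤ) = 2 * k := by exact_mod_cast hk.symm
    rcases hx i with h0 | ⟨hxn, hw1⟩ | ⟨hxk, hw1⟩
    · simp [h0]
    · rw [if_neg (by omega), hxn, hw1]; push_cast; ring
    · rcases Nat.eq_zero_or_pos k with hk0 | hk0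
      · simp [hxk, hk0]
      · rw [if_pos (by omega), hxk, hw1, hn]; push_cast; ring
  simp only [hterm, ← Finset.sum_filter, Finset.sum_const, nsmul_eq_mul]

theorem indivisible_iff_eq_two (hk : 2 * k = n) (hx : ∀ i, x i = 0 ∨ x i = n ∨ x i = k)
    {i₀ : ι} (hi₀ : x i₀ = k) (hk0 : 0 < k) :
    (∀ t : ℕ, 1 < t → ¬(t ∣ n ∧ ∀ i, t ∣ x i)) ↔ n = 2 := by
  constructor
  · intro hind
    by_contra hn2
    refine hind k (by omega) ⟨⟨2, by omega⟩, fun i => ?_⟩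
    rcases hx i with h | h | h <;> rw [h]
    exacts [dvd_zero k, ⟨2, by omega⟩]
  · rintro rfl t ht ⟨-, htx⟩
    have hk1 : k = 1 := by omega
    have := Nat.le_of_dvd one_pos (hk1 ▸ hi₀ ▸ htx i₀)
    omega

end SpecialEntries

theorem special_isotropic_props_general {m : ℕ} {r : Fin m → ℕ}
    (w : ∀ i, Fin (r i) → ℕ) (hw : ∀ i j, 0 < w i j)
    (d0 : ℕ) (dv : ∀ i, Fin (r i) → ℕ)
    (hbal : ∀ i, ∑ j, w i j * dv i j = d0)
    (hfour : (univ.filter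
      (fun p : (i : Fin m) × Fin (r i) => 0 < dv p.1 p.2 ∧ dv p.1 p.2 < d0)).card = 4)
    (hhalf : ∀ i j, 0 < dv i j → dv i j < d0 → 2 * dv i j = d0 ∧ w i j = 1) :
    ((d0 : ℤ) ^ 2 + ∑ i, ∑ j, (dv i j : ℤ) ^ 2
        - ∑ i, ∑ j, (w i j : ℤ) * (dv i j : ℤ) * (d0 : ℤ) = 0) ∧
    ((∀ t : ℕ, 1 < t → ¬(t ∣ d0 ∧ ∀ i j, t ∣ dv i j)) ↔ d0 = 2) := by
  obtain ⟨p₀, hp₀⟩ : (univ.filter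
      (fun p : (i : Fin m) × Fin (r i) => 0 < dv p.1 p.2 ∧ dv p.1 p.2 < d0)).Nonempty := by
    rw [← Finset.card_pos, hfour]; norm_num
  obtain ⟨hpos, hlt⟩ := (Finset.mem_filter.mp hp₀).2
  set k := dv p₀.1 p₀.2 with hk_def
  have hk : 2 * k = d0 := (hhalf p₀.1 p₀.2 hpos hlt).1
  have hcases : ∀ p : (i : Fin m) × Fin (r i), dv p.1 p.2 = 0 ∨
      (dv p.1 p.2 = d0 ∧ w p.1 p.2 = 1) ∨ (dv p.1 p.2 = k ∧ w p.1 p.2 = 1) := fun ⟨i, j⟩ =>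
    special_entry_cases hk (hw i j)
      (hbal i ▸ single_le_sum (f := fun j => w i j * dv i j) (fun _ _ => Nat.zero_le _) (mem_univ j))
      (hhalf i j)
  have heuler :=
    sum_mul_sub_sq_eq_card_mul_sq (fun p : (i : Fin m) × Fin (r i) => w p.1 p.2) hk hcases
  simp only [Fintype.sum_sigma, sum_sub_distrib] at heuler
  refine ⟨?_, ?_⟩
  · have hd0 : (d0 : ℤ) = 2 * k := by exact_mod_cast hk.symm
    rw [hfour, hd0] at heuler
    rw [hd0]
    linear_combination -heuler
  · simpa only [Sigma.forall] using indivisible_iff_eq_two hk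
      (fun p => (hcases p).imp_right (Or.imp And.left And.left)) hk_def.symm hpos

/-- A special isotropic dimension vector `d` (balanced, `d₀ = n ≥ 2`, exactly four
entries `d_{ij}` strictly between `0` and `n`, each equal to `n/2` with trivial weight)
is isotropic for the Euler form, and it is indivisible iff `n = 2`. -/
theorem special_isotropic_props {m : ℕ} {r : Fin m → ℕ}
    (w : ∀ i, Fin (r i) → ℕ) (hw : ∀ i j, 0 < w i j)
    (d0 : ℕ) (dv : ∀ i, Fin (r i) → ℕ) (hn : 2 ≤ d0)
    (hbal : ∀ i, ∑ j, w i j * dv i j = d0)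
    (hfour : (univ.filter
      (fun p : (i : Fin m) × Fin (r i) => 0 < dv p.1 p.2 ∧ dv p.1 p.2 < d0)).card = 4)
    (hhalf : ∀ i j, 0 < dv i j → dv i j < d0 → 2 * dv i j = d0 ∧ w i j = 1) :
    ((d0 : ℤ) ^ 2 + ∑ i, ∑ j, (dv i j : ℤ) ^ 2
        - ∑ i, ∑ j, (w i j : ℤ) * (dv i j : ℤ) * (d0 : ℤ) = 0) ∧
    ((∀ t : ℕ, 1 < t → ¬(t ∣ d0 ∧ ∀ i j, t ∣ dv i j)) ↔ d0 = 2) :=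
  special_isotropic_props_general w hw d0 dv hbal hfour hhalf
end
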